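/- (Density of the superconducting band.) Suppose that at the given parameter values the variational functional F has a unique maximizer r_β over [0,∞) and that r_β > 0. Then the map μ ↦ p(μ), obtained by letting μ_s = μ vary with all other parameters held fixed, is differentiable at μ = μ_s, and its derivative there equals d^{(s)} := 1 + (μ_s − λ_s)·G_0(r_β) + (μ_s − 2λ − λ_s)·G_1(r_β) + (μ_s − 4λ − λ_s)·G_2(r_β). -/

import Mathlib

open Real Filter

/-- `g_{r,x} := sqrt((x + λ_s − μ_s)² + γ_s²·r)`. -/
noncomputable def gg (gams lams mus r x : ℝ) : ℝ :=
  Real.sqrt ((x + lams - mus) ^ 2 + gams ^ 2 * r)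

/-- The function `f` from Theorem 1 of the paper. Parameters:
`beta` = β, `gams` = γ_s, `lams` = λ_s, `lamf` = λ_f, `lam` = λ,
`mus` = μ_s, `muf` = μ_f, `hs` = h_s, `hf` = h_f, `eta` = η. -/
noncomputable def ff (beta gams lams lamf lam mus muf hs hf eta r : ℝ) : ℝ :=
  (Real.exp (-(beta * muf)) + Real.exp (-(beta * (4 * lam + 2 * lamf - muf))))
      * Real.cosh (beta * hs)
    + Real.exp (-(beta * (2 * lam - hs))) * Real.cosh (beta * (eta + hf))
    + Real.exp (-(beta * (2 * lam + hs))) * Real.cosh (beta * (eta - hf))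
    + Real.exp (-(beta * (lams + muf))) * Real.cosh (beta * gg gams lams mus r 0)
    + Real.exp (-(beta * (4 * lam + lams + 2 * lamf - muf)))
      * Real.cosh (beta * gg gams lams mus r (4 * lam))
    + 2 * Real.exp (-(beta * (2 * lam + lams))) * Real.cosh (beta * hf)
      * Real.cosh (beta * gg gams lams mus r (2 * lam))

/-- The variational functional `F(r) := −γ_s·r + β⁻¹·ln f(r)`. -/
noncomputable def FF (beta gams lams lamf lam mus muf hs hf eta r : ℝ) : ℝ :=
  -(gams * r) + beta⁻¹ * Real.log (ff beta gams lams lamf lam mus muf hs hf eta r)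

/-- `G_0`. -/
noncomputable def G0 (beta gams lams lamf lam mus muf hs hf eta r : ℝ) : ℝ :=
  Real.sinh (beta * gg gams lams mus r 0) /
    (ff beta gams lams lamf lam mus muf hs hf eta r * Real.exp (beta * (lams + muf))
      * gg gams lams mus r 0)

/-- `G_1`. -/
noncomputable def G1 (beta gams lams lamf lam mus muf hs hf eta r : ℝ) : ℝ :=
  2 * Real.cosh (beta * hf) * Real.sinh (beta * gg gams lams mus r (2 * lam)) /
    (ff beta gams lams lamf lam mus muf hs hf eta r * Real.exp (beta * (2 * lam + lams))
      * gg gams lams mus r (2 * lam))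

/-- `G_2`. -/
noncomputable def G2 (beta gams lams lamf lam mus muf hs hf eta r : ℝ) : ℝ :=
  Real.sinh (beta * gg gams lams mus r (4 * lam)) /
    (ff beta gams lams lamf lam mus muf hs hf eta r
      * Real.exp (beta * (4 * lam + lams + 2 * lamf - muf))
      * gg gams lams mus r (4 * lam))

/-- The grand-canonical pressure `p = β⁻¹ ln 2 + μ_s + μ_f + sup_{r ≥ 0} F(r)`. -/
noncomputable def pp (beta gams lams lamf lam mus muf hs hf eta : ℝ) : ℝ :=
  beta⁻¹ * Real.log 2 + mus + muf +
    sSup ((fun r => FF beta gams lams lamf lam mus muf hs hf eta r) '' Set.Ici 0)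

/-!
Danskin's envelope argument. Shifting `μ_s` by `δ` moves every `g_{r,x}` by at most `|δ|`, and
raising `r` from `0` moves it by at most `γ_s √r`; since `cosh a ≤ e^{|a - b|} cosh b`, moving all
`g_{r,x}` by at most `d` multiplies `f` by at most `e^{βd}`. Hence `μ ↦ F(μ, r)` is 1-Lipschitz and
`F(r) ≤ F(0) + γ_s (1 - r) / 2`, so the superlevel sets of `F` are compact. For `μ` near `μ_s`, the
near-maximizers of `F(μ, ·)` are then near the unique maximizer `r_β`, where `∂_μ F` is continuous,
and `sup F(μ, ·) - sup F(μ_s, ·)` is squeezed between the increments of `F(·, r)` at `r = r_β`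
and at such a near-maximizer; both are `(μ - μ_s) ∂_μ F(μ_s, r_β) + o(μ - μ_s)`.
-/

open Set Topology Function
open scoped NNReal

section Danskin

variable {X : Type*} [TopologicalSpace X]

theorem exists_pos_forall_mem_of_isCompact_superlevel {f : X → ℝ} {s U : Set X} {x₀ : X} {c : ℝ}
    (hf : ContinuousOn f s) (hmax : ∀ x ∈ s, x ≠ x₀ → f x < f x₀)
    (hc : c < f x₀) (hK : IsCompact (s ∩ f ⁻¹' Ici c)) (hU : U ∈ 𝓝 x₀) :
    ∃ η > 0, ∀ x ∈ s, f x₀ - η < f x → x ∈ U := by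
  set K := (s ∩ f ⁻¹' Ici c) \ interior U
  have hx₀K : x₀ ∉ K := fun h => h.2 (mem_interior_iff_mem_nhds.2 hU)
  rcases K.eq_empty_or_nonempty with hKe | hKne
  · refine ⟨f x₀ - c, sub_pos.2 hc, fun x hx hfx => interior_subset ?_⟩
    by_contra hxU
    exact Set.eq_empty_iff_forall_notMem.1 hKe x ⟨⟨hx, show c ≤ f x by linarith⟩, hxU⟩
  · obtain ⟨x₁, hx₁K, hx₁max⟩ :=
      (hK.diff isOpen_interior).exists_isMaxOn hKne (hf.mono fun x hx => hx.1.1)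
    have hlt : f x₁ < f x₀ := hmax x₁ hx₁K.1.1 (ne_of_mem_of_not_mem hx₁K hx₀K)
    refine ⟨min (f x₀ - c) (f x₀ - f x₁), lt_min (sub_pos.2 hc) (sub_pos.2 hlt),
      fun x hx hfx => interior_subset ?_⟩
    by_contra hxU
    have hcx : c ≤ f x := by linarith [min_le_left (f x₀ - c) (f x₀ - f x₁)]
    have : f x ≤ f x₁ := hx₁max (show x ∈ K from ⟨⟨hx, hcx⟩, hxU⟩)
    linarith [min_le_right (f x₀ - c) (f x₀ - f x₁)]

theorem exists_forall_abs_sub_sub_mul_le {Φ D : ℝ → X → ℝ} {μ₀ : ℝ} {x₀ : X}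
    (hderiv : ∀ᶠ p in 𝓝 (μ₀, x₀), HasDerivAt (Φ · p.2) (D p.1 p.2) p.1)
    (hD : ContinuousAt (uncurry D) (μ₀, x₀)) {ε : ℝ} (hε : 0 < ε) :
    ∃ u ∈ 𝓝 μ₀, ∃ V ∈ 𝓝 x₀, ∀ μ ∈ u, ∀ x ∈ V,
      |Φ μ x - Φ μ₀ x - (μ - μ₀) * D μ₀ x₀| ≤ ε * |μ - μ₀| := by
  have hnear := hderiv.and (hD (Metric.closedBall_mem_nhds _ hε))
  rw [nhds_prod_eq, Filter.eventually_prod_iff] at hnear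
  obtain ⟨pu, hpu, pV, hpV, hp⟩ := hnear
  obtain ⟨δ, hδ, hball⟩ := Metric.eventually_nhds_iff_ball.1 hpu
  refine ⟨Metric.ball μ₀ δ, Metric.ball_mem_nhds _ hδ, {x | pV x}, hpV, fun μ hμ x hx => ?_⟩
  have hmvt := (convex_ball μ₀ δ).norm_image_sub_le_of_norm_hasDerivWithin_le
    (f := fun m => Φ m x - m * D μ₀ x₀) (f' := fun m => D m x - D μ₀ x₀)
    (fun m hm => ((hp (hball m hm) hx).1.fun_sub (hasDerivAt_mul_const _)).hasDerivWithinAt)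
    (fun m hm => by simpa [dist_eq_norm] using (hp (hball m hm) hx).2)
    (Metric.mem_ball_self hδ) hμ
  simp only [Real.norm_eq_abs] at hmvt
  convert hmvt using 2
  ring

theorem hasDerivAt_sSup_image {Φ D : ℝ → X → ℝ} {s : Set X} {μ₀ : ℝ} {x₀ : X} {L : ℝ≥0} {c : ℝ}
    (hcont : ContinuousOn (Φ μ₀) s) (hx₀ : x₀ ∈ s)
    (hmax : ∀ x ∈ s, x ≠ x₀ → Φ μ₀ x < Φ μ₀ x₀)
    (hc : c < Φ μ₀ x₀) (hK : IsCompact (s ∩ Φ μ₀ ⁻¹' Ici c))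
    (hlip : ∀ x ∈ s, LipschitzWith L (Φ · x))
    (hderiv : ∀ᶠ p in 𝓝 (μ₀, x₀), HasDerivAt (Φ · p.2) (D p.1 p.2) p.1)
    (hD : ContinuousAt (uncurry D) (μ₀, x₀)) :
    HasDerivAt (fun μ => sSup (Φ μ '' s)) (D μ₀ x₀) μ₀ := by
  set S := fun μ => sSup (Φ μ '' s)
  have hle : ∀ x ∈ s, Φ μ₀ x ≤ Φ μ₀ x₀ := fun x hx => by
    rcases eq_or_ne x x₀ with rfl | hne
    exacts [le_rfl, (hmax x hx hne).le]
  have hclose : ∀ μ, ∀ x ∈ s, |Φ μ x - Φ μ₀ x| ≤ L * |μ - μ₀| := fun μ x hx => by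
    simpa [Real.dist_eq] using (hlip x hx).dist_le_mul μ μ₀
  have hbdd : ∀ μ, BddAbove (Φ μ '' s) := fun μ => ⟨Φ μ₀ x₀ + L * |μ - μ₀|, by
    rintro _ ⟨x, hx, rfl⟩
    linarith [(abs_le.1 (hclose μ x hx)).2, hle x hx]⟩
  have hleS : ∀ μ, ∀ x ∈ s, Φ μ x ≤ S μ := fun μ x hx => le_csSup (hbdd μ) (mem_image_of_mem _ hx)
  have hS₀ : S μ₀ = Φ μ₀ x₀ := IsGreatest.csSup_eq
    ⟨mem_image_of_mem _ hx₀, by rintro _ ⟨x, hx, rfl⟩; exact hle x hx⟩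
  rw [hasDerivAt_iff_isLittleO, Asymptotics.isLittleO_iff]
  intro ε hε
  obtain ⟨u, hu, V, hV, happrox⟩ := exists_forall_abs_sub_sub_mul_le hderiv hD (half_pos hε)
  obtain ⟨η, hη, hnear⟩ := exists_pos_forall_mem_of_isCompact_superlevel hcont hmax hc hK hV
  have hsmall : ∀ᶠ μ in 𝓝 μ₀, 2 * L * |μ - μ₀| < η :=
    ContinuousAt.eventually_lt (by fun_prop) continuousAt_const (by simpa using hη)
  filter_upwards [hu, hsmall] with μ hμu hμη
  have lower : (μ - μ₀) * D μ₀ x₀ - ε / 2 * |μ - μ₀| ≤ S μ - S μ₀ := by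
    linarith [abs_le.1 (happrox μ hμu x₀ (mem_of_mem_nhds hV)), hleS μ x₀ hx₀]
  have upper : S μ - S μ₀ ≤ (μ - μ₀) * D μ₀ x₀ + ε / 2 * |μ - μ₀| := by
    refine le_of_forall_pos_lt_add fun t ht => ?_
    set t' := min t (η - 2 * L * |μ - μ₀|)
    have ht' : 0 < t' := lt_min ht (by linarith)
    obtain ⟨_, ⟨x, hx, rfl⟩, hxt⟩ :=
      exists_lt_of_lt_csSup ((nonempty_of_mem hx₀).image _) (sub_lt_self (S μ) ht')
    have hxV : x ∈ V := hnear x hx (by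
      linarith [abs_le.1 (hclose μ x hx), abs_le.1 (hclose μ x₀ hx₀), hleS μ x₀ hx₀,
        min_le_right t (η - 2 * L * |μ - μ₀|)])
    linarith [abs_le.1 (happrox μ hμu x hxV), hle x hx, min_le_left t (η - 2 * L * |μ - μ₀|)]
  rw [Real.norm_eq_abs, Real.norm_eq_abs, smul_eq_mul, abs_le]
  constructor <;> nlinarith [abs_nonneg (μ - μ₀)]

end Danskin

theorem sqrt_sq_add_le_sqrt_sq_add_add_abs (a b : ℝ) {c : ℝ} (hc : 0 ≤ c) :
    √(a ^ 2 + c) ≤ √(b ^ 2 + c) + |a - b| := by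
  have hb : |b| ≤ √(b ^ 2 + c) := abs_le_sqrt (by linarith)
  have hab : b * (a - b) ≤ |b| * |a - b| := by rw [← abs_mul]; exact le_abs_self _
  rw [sqrt_le_left (by positivity)]
  nlinarith [sq_sqrt (show 0 ≤ b ^ 2 + c by positivity), abs_nonneg (a - b), sq_abs (a - b)]

theorem cosh_le_exp_abs_sub_mul_cosh (a b : ℝ) : cosh a ≤ exp |a - b| * cosh b := by
  rw [cosh_eq, cosh_eq, mul_div_assoc', mul_add, ← exp_add, ← exp_add]
  gcongr
  · linarith [le_abs_self (a - b)]
  · linarith [neg_abs_le (a - b)]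

section Model

variable {beta gams lams lamf lam mus muf hs hf eta r : ℝ}

theorem gg_pos (hgams : gams ≠ 0) (hr : 0 < r) (x : ℝ) : 0 < gg gams lams mus r x :=
  sqrt_pos.2 (by positivity)

theorem abs_gg_sub_gg_le (mus' : ℝ) (hr : 0 ≤ r) (x : ℝ) :
    |gg gams lams mus' r x - gg gams lams mus r x| ≤ |mus' - mus| := by
  have key : ∀ m m' : ℝ, gg gams lams m r x ≤ gg gams lams m' r x + |m' - m| := fun m m' => by
    simpa [gg] using
      sqrt_sq_add_le_sqrt_sq_add_add_abs (x + lams - m) (x + lams - m')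
        (show 0 ≤ gams ^ 2 * r by positivity)
  rw [abs_sub_le_iff]
  constructor <;> linarith [key mus' mus, key mus mus', abs_sub_comm mus mus']

theorem abs_gg_sub_gg_zero_le (hgams : 0 ≤ gams) (hr : 0 ≤ r) (x : ℝ) :
    |gg gams lams mus r x - gg gams lams mus 0 x| ≤ gams * √r := by
  have hmono : gg gams lams mus 0 x ≤ gg gams lams mus r x :=
    sqrt_le_sqrt (by nlinarith [sq_nonneg gams])
  have hle : gg gams lams mus r x ≤ gg gams lams mus 0 x + gams * √r := by
    unfold gg
    rw [mul_zero, add_zero, sqrt_sq_eq_abs, sqrt_le_left (by positivity)]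
    nlinarith [sq_sqrt hr, sq_abs (x + lams - mus), mul_nonneg (abs_nonneg (x + lams - mus))
      (mul_nonneg hgams (sqrt_nonneg r))]
  rw [abs_of_nonneg (sub_nonneg.2 hmono)]
  linarith

theorem ff_pos : 0 < ff beta gams lams lamf lam mus muf hs hf eta r := by
  unfold ff; positivity

theorem ff_le_exp_mul_ff {mus' r' d : ℝ} (hbeta : 0 ≤ beta)
    (hd : ∀ x, |gg gams lams mus' r' x - gg gams lams mus r x| ≤ d) :
    ff beta gams lams lamf lam mus' muf hs hf eta r'
      ≤ exp (beta * d) * ff beta gams lams lamf lam mus muf hs hf eta r := by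
  have hcosh : ∀ x, cosh (beta * gg gams lams mus' r' x)
      ≤ exp (beta * d) * cosh (beta * gg gams lams mus r x) := fun x => by
    refine (cosh_le_exp_abs_sub_mul_cosh _ (beta * gg gams lams mus r x)).trans ?_
    rw [← mul_sub, abs_mul, abs_of_nonneg hbeta]
    gcongr
    exact hd x
  have hexp : 1 ≤ exp (beta * d) := one_le_exp (mul_nonneg hbeta ((abs_nonneg _).trans (hd 0)))
  have hconst : ∀ t : ℝ, 0 ≤ t → t ≤ exp (beta * d) * t := fun t ht => le_mul_of_one_le_left ht hexp
  unfold ff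
  linarith [hconst ((exp (-(beta * muf)) + exp (-(beta * (4 * lam + 2 * lamf - muf))))
      * cosh (beta * hs)) (by positivity),
    hconst (exp (-(beta * (2 * lam - hs))) * cosh (beta * (eta + hf))) (by positivity),
    hconst (exp (-(beta * (2 * lam + hs))) * cosh (beta * (eta - hf))) (by positivity),
    mul_le_mul_of_nonneg_left (hcosh 0) (exp_pos (-(beta * (lams + muf)))).le,
    mul_le_mul_of_nonneg_left (hcosh (4 * lam))
      (exp_pos (-(beta * (4 * lam + lams + 2 * lamf - muf)))).le,
    mul_le_mul_of_nonneg_left (hcosh (2 * lam))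
      (show 0 ≤ 2 * exp (-(beta * (2 * lam + lams))) * cosh (beta * hf) by positivity)]

theorem FF_le_FF_add {mus' r' d : ℝ} (hbeta : 0 < beta)
    (hd : ∀ x, |gg gams lams mus' r' x - gg gams lams mus r x| ≤ d) :
    FF beta gams lams lamf lam mus' muf hs hf eta r'
      ≤ FF beta gams lams lamf lam mus muf hs hf eta r + gams * (r - r') + d := by
  have hlog : log (ff beta gams lams lamf lam mus' muf hs hf eta r')
      ≤ beta * d + log (ff beta gams lams lamf lam mus muf hs hf eta r) := by
    rw [← log_exp (beta * d), ← log_mul (exp_pos _).ne' ff_pos.ne']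
    exact log_le_log ff_pos (ff_le_exp_mul_ff hbeta.le hd)
  have := mul_le_mul_of_nonneg_left hlog (inv_nonneg.2 hbeta.le)
  rw [mul_add, inv_mul_cancel_left₀ hbeta.ne'] at this
  unfold FF
  linarith

theorem lipschitzWith_FF (hbeta : 0 < beta) (hr : 0 ≤ r) :
    LipschitzWith 1 fun mu => FF beta gams lams lamf lam mu muf hs hf eta r :=
  LipschitzWith.of_le_add fun mu' mu => by
    simpa [Real.dist_eq] using FF_le_FF_add hbeta (abs_gg_sub_gg_le mu' hr)

theorem FF_le_FF_zero_add (hbeta : 0 < beta) (hgams : 0 ≤ gams) (hr : 0 ≤ r) :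
    FF beta gams lams lamf lam mus muf hs hf eta r
      ≤ FF beta gams lams lamf lam mus muf hs hf eta 0 + gams * (1 - r) / 2 := by
  have h : FF beta gams lams lamf lam mus muf hs hf eta r
      ≤ FF beta gams lams lamf lam mus muf hs hf eta 0 + gams * (0 - r) + gams * √r :=
    FF_le_FF_add hbeta (abs_gg_sub_gg_zero_le hgams hr)
  have hsqrt : √r ≤ (1 + r) / 2 := by nlinarith [sq_sqrt hr, sq_nonneg (√r - 1)]
  nlinarith

theorem continuous_FF : Continuous fun r => FF beta gams lams lamf lam mus muf hs hf eta r := by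
  have hff : Continuous fun r => ff beta gams lams lamf lam mus muf hs hf eta r := by
    unfold ff gg; fun_prop
  unfold FF
  exact (continuous_const.mul continuous_id).neg.add
    (continuous_const.mul (hff.log fun _ => ff_pos.ne'))

theorem isCompact_Ici_inter_FF_preimage_Ici (hbeta : 0 < beta) (hgams : 0 < gams) (c : ℝ) :
    IsCompact (Ici 0 ∩ (fun r => FF beta gams lams lamf lam mus muf hs hf eta r) ⁻¹' Ici c) := by
  refine (isCompact_Icc (a := 0)
    (b := 1 + 2 * (FF beta gams lams lamf lam mus muf hs hf eta 0 - c) / gams)).of_isClosed_subset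
    (isClosed_Ici.inter (isClosed_Ici.preimage continuous_FF)) fun r ⟨hr, hc⟩ => ⟨hr, ?_⟩
  have := (mem_Ici.1 hc).trans (FF_le_FF_zero_add hbeta hgams.le hr)
  rw [add_div' _ _ _ hgams.ne', le_div_iff₀ hgams]
  nlinarith

theorem hasDerivAt_gg (hgams : gams ≠ 0) (hr : 0 < r) (x : ℝ) :
    HasDerivAt (fun m => gg gams lams m r x) ((mus - x - lams) / gg gams lams mus r x) mus := by
  have h := ((((hasDerivAt_id' mus).const_sub (x + lams)).fun_pow 2).add_const (gams ^ 2 * r)).sqrt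
    (by positivity)
  unfold gg
  convert h using 1
  field_simp
  ring

noncomputable def FFDerivMus (beta gams lams lamf lam mus muf hs hf eta r : ℝ) : ℝ :=
  (mus - lams) * G0 beta gams lams lamf lam mus muf hs hf eta r
    + (mus - 2 * lam - lams) * G1 beta gams lams lamf lam mus muf hs hf eta r
    + (mus - 4 * lam - lams) * G2 beta gams lams lamf lam mus muf hs hf eta r

theorem hasDerivAt_FF_mus (hbeta : beta ≠ 0) (hgams : gams ≠ 0) (hr : 0 < r) :
    HasDerivAt (fun m => FF beta gams lams lamf lam m muf hs hf eta r)
      (FFDerivMus beta gams lams lamf lam mus muf hs hf eta r) mus := by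
  have hcosh : ∀ x c : ℝ, HasDerivAt (fun m => c * cosh (beta * gg gams lams m r x))
      (c * (sinh (beta * gg gams lams mus r x)
        * (beta * ((mus - x - lams) / gg gams lams mus r x)))) mus := fun x c =>
    (((hasDerivAt_gg hgams hr x).const_mul beta).cosh).const_mul c
  have hff : HasDerivAt (fun m => ff beta gams lams lamf lam m muf hs hf eta r)
      (exp (-(beta * (lams + muf))) * (sinh (beta * gg gams lams mus r 0)
          * (beta * ((mus - 0 - lams) / gg gams lams mus r 0)))
        + exp (-(beta * (4 * lam + lams + 2 * lamf - muf)))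
          * (sinh (beta * gg gams lams mus r (4 * lam))
          * (beta * ((mus - 4 * lam - lams) / gg gams lams mus r (4 * lam))))
        + 2 * exp (-(beta * (2 * lam + lams))) * cosh (beta * hf)
          * (sinh (beta * gg gams lams mus r (2 * lam))
          * (beta * ((mus - 2 * lam - lams) / gg gams lams mus r (2 * lam))))) mus := by
    unfold ff
    refine ((((hasDerivAt_const mus _).add (hcosh 0 _)).add (hcosh (4 * lam) _)).add
      (hcosh (2 * lam) _)).congr_deriv ?_
    ring
  have hgg : ∀ x, gg gams lams mus r x ≠ 0 := fun x => (gg_pos hgams hr x).ne'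
  have hff0 : ff beta gams lams lamf lam mus muf hs hf eta r ≠ 0 := ff_pos.ne'
  unfold FF
  refine (((hff.log ff_pos.ne').const_mul beta⁻¹).const_add (-(gams * r))).congr_deriv ?_
  unfold FFDerivMus G0 G1 G2
  rw [exp_neg, exp_neg, exp_neg]
  field_simp
  ring

theorem continuousAt_FFDerivMus (hgams : gams ≠ 0) (hr : 0 < r) :
    ContinuousAt (fun p : ℝ × ℝ => FFDerivMus beta gams lams lamf lam p.1 muf hs hf eta p.2)
      (mus, r) := by
  unfold FFDerivMus G0 G1 G2 ff gg
  fun_prop (disch := positivity)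

end Model

theorem pressure_deriv_mus_general (beta gams lams lamf lam mus muf hs hf eta : ℝ) (hbeta : 0 < beta) (hgams : 0 < gams)
    (rb : ℝ) (hpos : 0 < rb) (hmax : ∀ r' : ℝ, 0 ≤ r' → FF beta gams lams lamf lam mus muf hs hf eta r' ≤ FF beta gams lams lamf lam mus muf hs hf eta rb)
    (huniq : ∀ r : ℝ, 0 ≤ r → (∀ r' : ℝ, 0 ≤ r' → FF beta gams lams lamf lam mus muf hs hf eta r' ≤ FF beta gams lams lamf lam mus muf hs hf eta r) → r = rb) :
    HasDerivAt (fun mu => pp beta gams lams lamf lam mu muf hs hf eta)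
      (1 + (mus - lams) * G0 beta gams lams lamf lam mus muf hs hf eta rb
        + (mus - 2 * lam - lams) * G1 beta gams lams lamf lam mus muf hs hf eta rb
        + (mus - 4 * lam - lams) * G2 beta gams lams lamf lam mus muf hs hf eta rb) mus := by
  have hstrict : ∀ r ∈ Ici 0, r ≠ rb → FF beta gams lams lamf lam mus muf hs hf eta r
      < FF beta gams lams lamf lam mus muf hs hf eta rb := fun r hr hne =>
    (hmax r hr).lt_of_ne fun h => hne (huniq r hr fun r' hr' => (hmax r' hr').trans_eq h.symm)
  have hderiv : ∀ᶠ p : ℝ × ℝ in 𝓝 (mus, rb), HasDerivAt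
      (fun m => FF beta gams lams lamf lam m muf hs hf eta p.2)
      (FFDerivMus beta gams lams lamf lam p.1 muf hs hf eta p.2) p.1 :=
    (continuousAt_const.eventually_lt continuousAt_snd hpos).mono fun p hp =>
      hasDerivAt_FF_mus hbeta.ne' hgams.ne' hp
  have hsup := hasDerivAt_sSup_image
    (Φ := fun m r => FF beta gams lams lamf lam m muf hs hf eta r)
    (D := fun m r => FFDerivMus beta gams lams lamf lam m muf hs hf eta r)
    continuous_FF.continuousOn hpos.le hstrict (sub_one_lt _)
    (isCompact_Ici_inter_FF_preimage_Ici hbeta hgams _)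
    (fun r hr => lipschitzWith_FF hbeta hr) hderiv (continuousAt_FFDerivMus hgams.ne' hpos)
  unfold pp
  refine ((((hasDerivAt_id' mus).const_add _).add_const muf).add hsup).congr_deriv ?_
  unfold FFDerivMus
  ring

/-- density of the superconducting band: if `F` has a unique
maximizer `rb > 0`, then `μ ↦ p(μ)` (varying `μ_s`) is differentiable at `μ_s`
with derivative `d⁽ˢ⁾ = 1 + (μ_s − λ_s)G_0(rb) + (μ_s − 2λ − λ_s)G_1(rb)
+ (μ_s − 4λ − λ_s)G_2(rb)`. -/
theorem pressure_deriv_mus (beta gams lams lamf lam mus muf hs hf eta : ℝ) (hbeta : 0 < beta) (hgams : 0 < gams) (hlams : 0 ≤ lams) (hlamf : 0 ≤ lamf) (hlam : 0 ≤ lam)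
    (rb : ℝ) (hpos : 0 < rb) (hrb : 0 ≤ rb) (hmax : ∀ r' : ℝ, 0 ≤ r' → FF beta gams lams lamf lam mus muf hs hf eta r' ≤ FF beta gams lams lamf lam mus muf hs hf eta rb)
    (huniq : ∀ r : ℝ, 0 ≤ r → (∀ r' : ℝ, 0 ≤ r' → FF beta gams lams lamf lam mus muf hs hf eta r' ≤ FF beta gams lams lamf lam mus muf hs hf eta r) → r = rb) :
    HasDerivAt (fun mu => pp beta gams lams lamf lam mu muf hs hf eta)
      (1 + (mus - lams) * G0 beta gams lams lamf lam mus muf hs hf eta rb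
        + (mus - 2 * lam - lams) * G1 beta gams lams lamf lam mus muf hs hf eta rb
        + (mus - 4 * lam - lams) * G2 beta gams lams lamf lam mus muf hs hf eta rb) mus :=
  pressure_deriv_mus_general beta gams lams lamf lam mus muf hs hf eta hbeta hgams rb hpos hmax
    huniq
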